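/- Let n, k, m be integers with 1 ≤ k ≤ n/2 and n−k ≤ m ≤ n−2, and let G be a connected simple graph on n vertices with minimum degree at least k and maximum degree at most m. Then R'(G) ≥ n/2 − (1/2)·(1/k − 1/m)·k·(n−k). -/

import Mathlib

/-!
Since `1 / max(a, b) = 1/a - (1/a - 1/b)⁺`, summing over darts gives `2 R'(G) = n - S` with
`S = ∑_{(u,v)} (1/d(u) - 1/d(v))⁺`. Slicing `1/a - 1/b = ∑_{a ≤ t < b} (1/t - 1/(t+1))` turns `S`
into `∑_{k ≤ t < m} (1/t - 1/(t+1)) c(t)`, where `c(t)` counts the darts leaving the set `L_t` of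
vertices of degree at most `t`. Hence `c(t) ≤ |L_t| (n - |L_t|)` and `c(t) ≤ ∑_{v ∈ L_t} d(v)`.
Let `θ ≥ k` be least with `|L_θ| ≥ n - k`. For `t ≥ θ` the first bound gives `c(t) ≤ k (n - k)`,
contributing at most `k (n - k) (1/θ - 1/m)`. For `t < θ` the second bound, summed over `t`, charges
each vertex `v` of degree `< θ` at most `d(v) (1/d(v) - 1/θ) ≤ 1 - k/θ`, and there are at most
`n - k` such vertices. The two parts add up to `(n - k)(1 - k/m)`.
-/

open scoped Classical

/-- The variation of the Randić index: `R'(G) = ∑_{uv ∈ E(G)} 1 / max(d(u), d(v))`. -/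
noncomputable def Rvar {V : Type*} [Fintype V] (G : SimpleGraph V) : ℝ :=
  ∑ e ∈ G.edgeFinset,
    Sym2.lift ⟨fun u v => (1 : ℝ) / (max (G.degree u) (G.degree v) : ℕ),
      fun u v => by dsimp only; rw [max_comm]⟩ e

open Finset

lemma sum_Ico_inv_sub_inv_succ {K : Type*} [Field K] {a b : ℕ} (hab : a ≤ b) :
    ∑ t ∈ Ico a b, ((t : K)⁻¹ - ((t : K) + 1)⁻¹) = (a : K)⁻¹ - (b : K)⁻¹ := by
  have := sum_Ico_sub (fun t : ℕ => -((t : K)⁻¹)) hab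
  push_cast at this
  simpa only [neg_sub_neg] using this

section OrderedField

variable {K : Type*} [Field K] [LinearOrder K] [IsStrictOrderedRing K]

lemma inv_max_eq_inv_sub_max_zero {x y : K} (hx : 0 < x) (hy : 0 < y) :
    (max x y)⁻¹ = x⁻¹ - max (x⁻¹ - y⁻¹) 0 := by
  rcases le_total x y with h | h
  · rw [max_eq_right h, max_eq_left (sub_nonneg.mpr (inv_anti₀ hx h))]
    ring
  · rw [max_eq_left h, max_eq_right (sub_nonpos.mpr (inv_anti₀ hy h))]
    ring

lemma inv_sub_inv_succ_nonneg {t : ℕ} (ht : 0 < t) : 0 ≤ (t : K)⁻¹ - ((t : K) + 1)⁻¹ :=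
  sub_nonneg.mpr (inv_anti₀ (by positivity) (by linarith))

/-- Layer-cake form of the positive part of `1/a - 1/b`, with layers indexed by `[k, m)`. -/
lemma max_inv_sub_inv_zero_eq_sum_Ico {k m a b : ℕ} (hka : k ≤ a) (hbm : b ≤ m)
    (ha : 0 < a) (hb : 0 < b) :
    max ((a : K)⁻¹ - (b : K)⁻¹) 0 =
      ∑ t ∈ Ico k m, if a ≤ t ∧ t < b then (t : K)⁻¹ - ((t : K) + 1)⁻¹ else 0 := by
  have hfilter : {t ∈ Ico k m | a ≤ t ∧ t < b} = Ico a b := by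
    ext t
    simp only [mem_filter, mem_Ico]
    omega
  rw [← sum_filter, hfilter]
  rcases le_total a b with h | h
  · rw [sum_Ico_inv_sub_inv_succ h, max_eq_left]
    exact sub_nonneg.mpr (inv_anti₀ (by positivity) (by exact_mod_cast h))
  · rw [Ico_eq_empty_of_le h, sum_empty, max_eq_right]
    exact sub_nonpos.mpr (inv_anti₀ (by positivity) (by exact_mod_cast h))

lemma sum_Ico_inv_sub_inv_succ_mul_le {a b : ℕ} {c : ℕ → K} {C : K} (ha : 0 < a) (hab : a ≤ b)
    (hc : ∀ t ∈ Ico a b, c t ≤ C) :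
    ∑ t ∈ Ico a b, ((t : K)⁻¹ - ((t : K) + 1)⁻¹) * c t ≤ C * ((a : K)⁻¹ - (b : K)⁻¹) :=
  calc ∑ t ∈ Ico a b, ((t : K)⁻¹ - ((t : K) + 1)⁻¹) * c t
      ≤ ∑ t ∈ Ico a b, ((t : K)⁻¹ - ((t : K) + 1)⁻¹) * C :=
        sum_le_sum fun t ht => mul_le_mul_of_nonneg_left (hc t ht)
          (inv_sub_inv_succ_nonneg (ha.trans_le (mem_Ico.mp ht).1))
    _ = C * ((a : K)⁻¹ - (b : K)⁻¹) := by rw [← sum_mul, sum_Ico_inv_sub_inv_succ hab, mul_comm]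

end OrderedField

lemma mul_tsub_le_mul_tsub {n k a : ℕ} (hkn : 2 * k ≤ n) (ha : n - k ≤ a) :
    a * (n - a) ≤ k * (n - k) := by
  rcases le_total a n with h | h
  · -- `k (n - k) - a (n - a) = (a - k) (a - (n - k))`
    have hk : k ≤ n := by omega
    zify [h, hk]
    nlinarith [mul_nonneg (sub_nonneg.mpr (show (k : ℤ) ≤ a by omega))
      (sub_nonneg.mpr (show (n : ℤ) - k ≤ a by omega))]
  · simp [Nat.sub_eq_zero_of_le h]

namespace SimpleGraph

variable {V : Type*} [Fintype V] (G : SimpleGraph V)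

theorem sum_darts_eq_two_nsmul_sum_edgeFinset {M : Type*} [AddCommMonoid M] (F : V → V → M)
    (hF : ∀ u v, F u v = F v u) :
    ∑ d : G.Dart, F d.fst d.snd = 2 • ∑ e ∈ G.edgeFinset, Sym2.lift ⟨F, hF⟩ e := by
  rw [← sum_fiberwise_of_maps_to (g := Dart.edge) (t := G.edgeFinset)
    (fun d _ => mem_edgeFinset.mpr d.edge_mem), smul_sum]
  refine sum_congr rfl fun e he => ?_
  induction e with
  | _ u v =>
    let d : G.Dart := ⟨(u, v), mem_edgeFinset.mp he⟩
    rw [show ({d' | d'.edge = s(u, v)} : Finset G.Dart) = {d, d.symm} from d.edge_fiber,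
      sum_pair d.symm_ne.symm]
    simp [d, hF v u, two_smul]

theorem sum_darts_fst {M : Type*} [AddCommMonoid M] (f : V → M) :
    ∑ d : G.Dart, f d.fst = ∑ v, G.degree v • f v := by
  rw [← sum_fiberwise_of_maps_to (g := fun d : G.Dart => d.fst) (t := univ)
    (fun d _ => mem_univ _)]
  refine sum_congr rfl fun v _ => ?_
  rw [sum_congr rfl fun d hd => congrArg f (mem_filter.mp hd).2, sum_const]
  congr 1
  convert G.dart_fst_fiber_card_eq_degree v

theorem sum_darts_inv_degree_fst (hpos : ∀ v, 0 < G.degree v) :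
    ∑ d : G.Dart, (G.degree d.fst : ℝ)⁻¹ = Fintype.card V := by
  rw [sum_darts_fst (f := fun v => (G.degree v : ℝ)⁻¹)]
  calc ∑ v, G.degree v • (G.degree v : ℝ)⁻¹ = ∑ _v : V, (1 : ℝ) :=
        sum_congr rfl fun v _ => by
          rw [nsmul_eq_mul, mul_inv_cancel₀ (by exact_mod_cast (hpos v).ne')]
    _ = Fintype.card V := by simp

noncomputable def degreeLeFinset (t : ℕ) : Finset V := {v | G.degree v ≤ t}

noncomputable def degreeCut (t : ℕ) : Finset G.Dart :=
  {d | G.degree d.fst ≤ t ∧ t < G.degree d.snd}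

noncomputable def inverseDegreeExcess : ℝ :=
  ∑ d : G.Dart, max ((G.degree d.fst : ℝ)⁻¹ - (G.degree d.snd : ℝ)⁻¹) 0

theorem two_mul_Rvar_eq (hpos : ∀ v, 0 < G.degree v) :
    2 * Rvar G = Fintype.card V - G.inverseDegreeExcess := by
  rw [Rvar, two_mul, ← two_nsmul, ← G.sum_darts_eq_two_nsmul_sum_edgeFinset, inverseDegreeExcess,
    ← G.sum_darts_inv_degree_fst hpos, ← sum_sub_distrib]
  refine sum_congr rfl fun d _ => ?_
  rw [Nat.cast_max, one_div, inv_max_eq_inv_sub_max_zero]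
  all_goals exact_mod_cast hpos _

theorem inverseDegreeExcess_eq_sum_Ico {k m : ℕ} (hk : 0 < k) (hmin : ∀ v, k ≤ G.degree v)
    (hmax : ∀ v, G.degree v ≤ m) :
    G.inverseDegreeExcess =
      ∑ t ∈ Ico k m, ((t : ℝ)⁻¹ - ((t : ℝ) + 1)⁻¹) * #(G.degreeCut t) := by
  rw [inverseDegreeExcess, sum_congr rfl fun d _ => max_inv_sub_inv_zero_eq_sum_Ico (hmin _)
    (hmax _) (hk.trans_le (hmin _)) (hk.trans_le (hmin _)), sum_comm]
  refine sum_congr rfl fun t _ => ?_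
  rw [← sum_filter, sum_const, nsmul_eq_mul, mul_comm, degreeCut]

theorem card_degreeCut_le_mul (t : ℕ) :
    #(G.degreeCut t) ≤ #(G.degreeLeFinset t) * (Fintype.card V - #(G.degreeLeFinset t)) := by
  rw [← card_compl, ← card_product]
  refine card_le_card_of_injOn (fun d => d.toProd) (fun d hd => ?_)
    (fun _ _ _ _ h => Dart.ext _ _ h)
  simp_all [degreeCut, degreeLeFinset]

theorem card_degreeCut_le_sum_degree (t : ℕ) :
    #(G.degreeCut t) ≤ ∑ v ∈ G.degreeLeFinset t, G.degree v :=
  calc #(G.degreeCut t) ≤ #{d : G.Dart | G.degree d.fst ≤ t} :=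
        card_le_card fun d hd => by
          simp only [degreeCut, mem_filter] at hd ⊢
          exact ⟨hd.1, hd.2.1⟩
    _ = ∑ d : G.Dart, if G.degree d.fst ≤ t then 1 else 0 := card_filter _ _
    _ = ∑ v, G.degree v • if G.degree v ≤ t then 1 else 0 :=
        G.sum_darts_fst fun v => if G.degree v ≤ t then 1 else 0
    _ = ∑ v ∈ G.degreeLeFinset t, G.degree v := by simp [degreeLeFinset, sum_filter]

theorem card_degreeCut_le_of_le_card {k t : ℕ} (hkn : 2 * k ≤ Fintype.card V)
    (ht : Fintype.card V - k ≤ #(G.degreeLeFinset t)) :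
    #(G.degreeCut t) ≤ k * (Fintype.card V - k) :=
  (G.card_degreeCut_le_mul t).trans (mul_tsub_le_mul_tsub hkn ht)

theorem sum_Ico_mul_card_degreeCut_le {k θ : ℕ} (hk : 0 < k) (hmin : ∀ v, k ≤ G.degree v)
    (hkθ : k ≤ θ) :
    ∑ t ∈ Ico k θ, ((t : ℝ)⁻¹ - ((t : ℝ) + 1)⁻¹) * #(G.degreeCut t) ≤
      #{v | G.degree v < θ} * (1 - k / θ) := by
  have hθ : (0 : ℝ) < θ := by exact_mod_cast hk.trans_le hkθ
  calc ∑ t ∈ Ico k θ, ((t : ℝ)⁻¹ - ((t : ℝ) + 1)⁻¹) * #(G.degreeCut t)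
      ≤ ∑ t ∈ Ico k θ, ∑ v ∈ G.degreeLeFinset t, ((t : ℝ)⁻¹ - ((t : ℝ) + 1)⁻¹) * G.degree v :=
        sum_le_sum fun t ht => by
          rw [← mul_sum]
          gcongr
          · exact inv_sub_inv_succ_nonneg (hk.trans_le (mem_Ico.mp ht).1)
          · exact_mod_cast G.card_degreeCut_le_sum_degree t
    _ = ∑ v ∈ {v | G.degree v < θ}, ∑ t ∈ Ico (G.degree v) θ,
          ((t : ℝ)⁻¹ - ((t : ℝ) + 1)⁻¹) * G.degree v :=
        sum_comm' fun t v => by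
          have := hmin v
          simp only [degreeLeFinset, mem_Ico, mem_filter, mem_univ, true_and]
          omega
    _ = ∑ v ∈ {v | G.degree v < θ}, (1 - G.degree v / θ : ℝ) :=
        sum_congr rfl fun v hv => by
          have hdv : (0 : ℝ) < G.degree v := by exact_mod_cast hk.trans_le (hmin v)
          rw [← sum_mul, sum_Ico_inv_sub_inv_succ (mem_filter.mp hv).2.le]
          field_simp
    _ ≤ ∑ v ∈ {v | G.degree v < θ}, (1 - k / θ : ℝ) :=
        sum_le_sum fun v _ => by gcongr; exact_mod_cast hmin v
    _ = #{v | G.degree v < θ} * (1 - k / θ) := by rw [sum_const, nsmul_eq_mul]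

theorem exists_degree_threshold {k m : ℕ} (hmin : ∀ v, k ≤ G.degree v)
    (hmax : ∀ v, G.degree v ≤ m) (hkm : k ≤ m) :
    ∃ θ, k ≤ θ ∧ θ ≤ m ∧ #{v | G.degree v < θ} ≤ Fintype.card V - k ∧
      ∀ t, θ ≤ t → Fintype.card V - k ≤ #(G.degreeLeFinset t) := by
  have hm : Fintype.card V - k ≤ #(G.degreeLeFinset m) := by
    rw [degreeLeFinset, filter_true_of_mem fun v _ => hmax v, card_univ]
    exact Nat.sub_le _ _
  have hP : ∃ θ, k ≤ θ ∧ Fintype.card V - k ≤ #(G.degreeLeFinset θ) := ⟨m, hkm, hm⟩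
  obtain ⟨hkθ, hθ⟩ := Nat.find_spec hP
  have hθm := Nat.find_min' hP ⟨hkm, hm⟩
  have hθmin := fun t => Nat.find_min (m := t) hP
  generalize Nat.find hP = θ at hkθ hθ hθm hθmin
  refine ⟨θ, hkθ, hθm, ?_, fun t ht => hθ.trans <| card_le_card fun v hv => ?_⟩
  · rcases hkθ.eq_or_lt with rfl | hθk
    · rw [filter_false_of_mem fun v _ => not_lt.mpr (hmin v), card_empty]
      exact Nat.zero_le _
    · have hset : ({v | G.degree v < θ} : Finset V) = G.degreeLeFinset (θ - 1) := by
        ext v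
        simp only [degreeLeFinset, mem_filter, mem_univ, true_and]
        omega
      have := hθmin (θ - 1) (by omega)
      rw [hset]
      omega
  · simp only [degreeLeFinset, mem_filter, mem_univ, true_and] at hv ⊢
    omega

theorem inverseDegreeExcess_le {k m : ℕ} (hk : 0 < k) (hkn : 2 * k ≤ Fintype.card V)
    (hkm : k ≤ m) (hmin : ∀ v, k ≤ G.degree v) (hmax : ∀ v, G.degree v ≤ m) :
    G.inverseDegreeExcess ≤ (Fintype.card V - k) * (1 - k / m) := by
  obtain ⟨θ, hkθ, hθm, hlow, hhigh⟩ := G.exists_degree_threshold hmin hmax hkm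
  have hθ : 0 < θ := hk.trans_le hkθ
  have hθ' : (0 : ℝ) < θ := by exact_mod_cast hθ
  have hlow' : (#{v | G.degree v < θ} : ℝ) ≤ Fintype.card V - k := by
    rw [← Nat.cast_sub (by omega)]
    exact_mod_cast hlow
  have hhigh' : ∀ t ∈ Ico θ m, (#(G.degreeCut t) : ℝ) ≤ k * (Fintype.card V - k) := by
    intro t ht
    rw [← Nat.cast_sub (by omega)]
    exact_mod_cast G.card_degreeCut_le_of_le_card hkn (hhigh t (mem_Ico.mp ht).1)
  have hkθ' : (k : ℝ) / θ ≤ 1 := (div_le_one hθ').mpr (by exact_mod_cast hkθ)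
  rw [G.inverseDegreeExcess_eq_sum_Ico hk hmin hmax, ← sum_Ico_consecutive _ hkθ hθm]
  calc _ ≤ (Fintype.card V - k) * (1 - k / θ) +
          k * (Fintype.card V - k) * ((θ : ℝ)⁻¹ - (m : ℝ)⁻¹) :=
        add_le_add ((G.sum_Ico_mul_card_degreeCut_le hk hmin hkθ).trans
            (mul_le_mul_of_nonneg_right hlow' (sub_nonneg.mpr hkθ')))
          (sum_Ico_inv_sub_inv_succ_mul_le hθ hθm hhigh')
    _ = (Fintype.card V - k) * (1 - k / m) := by field_simp; ring

end SimpleGraph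

theorem stmt_14_general {n k m : ℕ} (hk : 1 ≤ k) (hkn : 2 * k ≤ n)
    {V : Type*} [Fintype V] (G : SimpleGraph V)
    (hcard : Fintype.card V = n)
    (hmin : ∀ v : V, k ≤ G.degree v) (hmax : ∀ v : V, G.degree v ≤ m) :
    (n : ℝ) / 2 - (1 / 2) * (1 / k - 1 / m) * k * (n - k) ≤ Rvar G := by
  subst hcard
  obtain ⟨v⟩ : Nonempty V := Fintype.card_pos_iff.mp (by omega)
  have hkm : k ≤ m := (hmin v).trans (hmax v)
  have hk' : (0 : ℝ) < k := by exact_mod_cast hk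
  have hm' : (0 : ℝ) < m := by exact_mod_cast (hk.trans hkm)
  have hR := G.two_mul_Rvar_eq fun v => hk.trans (hmin v)
  have hS := G.inverseDegreeExcess_le hk hkn hkm hmin hmax
  have hbound : (1 / k - 1 / m) * k * (Fintype.card V - k : ℝ) =
      (Fintype.card V - k) * (1 - k / m) := by
    field_simp
  linarith

theorem stmt_14 {n k m : ℕ} (hk : 1 ≤ k) (hkn : 2 * k ≤ n)
    (hnm : n - k ≤ m) (hmn : m + 2 ≤ n)
    {V : Type*} [Fintype V] (G : SimpleGraph V)
    (hcard : Fintype.card V = n) (hconn : G.Connected)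
    (hmin : ∀ v : V, k ≤ G.degree v) (hmax : ∀ v : V, G.degree v ≤ m) :
    (n : ℝ) / 2 - (1 / 2) * (1 / k - 1 / m) * k * (n - k) ≤ Rvar G :=
  stmt_14_general hk hkn G hcard hmin hmax
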